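/- If φ and ψ are a-objective formulas such that L_a φ ∧ N_a ψ is satisfiable in the k-structures semantics, then φ ∨ ψ is valid (semantic version of Lemma: consistency of L_i φ ∧ N_i ψ forces φ ∨ ψ valid). -/

import Mathlib

abbrev Atom := ℕ
abbrev World := Set Atom

/-- `KStr k` : the type of `k`-structures. A 0-structure is the trivial
empty object `PUnit.unit` (playing the role of `∅`); a `(k+1)`-structure is a
set of pairs of a world and a `k`-structure. Thus a 1-structure is a subset of
`W × {∅}`. -/
def KStr : ℕ → Type
  | 0 => PUnit
  | (k+1) => Set (World × KStr k)


def toSet {k : ℕ} (e : KStr (k+1)) : Set (World × KStr k) := e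

instance {k : ℕ} : Membership (World × KStr k) (KStr (k+1)) :=
  inferInstanceAs (Membership _ (Set (World × KStr k)))
instance {k : ℕ} : EmptyCollection (KStr (k+1)) :=
  inferInstanceAs (EmptyCollection (Set (World × KStr k)))
instance {k : ℕ} : Union (KStr (k+1)) :=
  inferInstanceAs (Union (Set (World × KStr k)))
instance {k : ℕ} : Compl (KStr (k+1)) :=
  inferInstanceAs (Compl (Set (World × KStr k)))

def unit0 : KStr 0 := PUnit.unit

/-- Formulas of the propositional multi-agent only-knowing language ONL_n
with modal operators L_a, N_a, L_b, N_b. -/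
inductive Formula : Type
  | atom : Atom → Formula
  | fls  : Formula
  | neg  : Formula → Formula
  | or   : Formula → Formula → Formula
  | La   : Formula → Formula
  | Na   : Formula → Formula
  | Lb   : Formula → Formula
  | Nb   : Formula → Formula

def Formula.and (α β : Formula) : Formula := .neg (.or (.neg α) (.neg β))
def Formula.imp (α β : Formula) : Formula := .or (.neg α) β
/-- O_a α := L_a α ∧ N_a ¬α -/
def Formula.Oa (α : Formula) : Formula := (Formula.La α).and (Formula.Na (.neg α))
/-- O_b α := L_b α ∧ N_b ¬α -/
def Formula.Ob (α : Formula) : Formula := (Formula.Lb α).and (Formula.Nb (.neg α))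

/-- Satisfaction at a (k,j)-model `(ea, eb, w)`. -/
def sat : (k : ℕ) → (j : ℕ) → KStr k → KStr j → World → Formula → Prop
  | _, _, _, _, w, .atom p => p ∈ w
  | _, _, _, _, _, .fls => False
  | k, j, ea, eb, w, .neg α => ¬ sat k j ea eb w α
  | k, j, ea, eb, w, .or α β => sat k j ea eb w α ∨ sat k j ea eb w β
  | 0, _, _, _, _, .La _ => True
  | (k+1), _, ea, _, _, .La α => ∀ p ∈ ea, sat (k+1) k ea p.2 p.1 α
  | 0, _, _, _, _, .Na _ => True
  | (k+1), _, ea, _, _, .Na α => ∀ p : World × KStr k, p ∉ ea → sat (k+1) k ea p.2 p.1 α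
  | _, 0, _, _, _, .Lb _ => True
  | k, (j+1), _, eb, _, .Lb α => ∀ p ∈ eb, sat j (j+1) p.2 eb p.1 α
  | _, 0, _, _, _, .Nb _ => True
  | k, (j+1), _, eb, _, .Nb α => ∀ p : World × KStr j, p ∉ eb → sat j (j+1) p.2 eb p.1 α

mutual
/-- a-depth of a formula -/
def depthA : Formula → ℕ
  | .atom _ => 1
  | .fls => 1
  | .neg α => depthA α
  | .or α β => max (depthA α) (depthA β)
  | .La α => depthA α
  | .Na α => depthA α
  | .Lb α => depthB α + 1
  | .Nb α => depthB α + 1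
/-- b-depth of a formula -/
def depthB : Formula → ℕ
  | .atom _ => 1
  | .fls => 1
  | .neg α => depthB α
  | .or α β => max (depthB α) (depthB β)
  | .Lb α => depthB α
  | .Nb α => depthB α
  | .La α => depthA α + 1
  | .Na α => depthA α + 1
end

/-- the restriction `e↓ₖ` of a structure -/
def restrict : (k : ℕ) → {m : ℕ} → KStr m → KStr k
  | 0, _, _ => unit0
  | (k+1), 0, _ => (∅ : Set (World × KStr k))
  | (k+1), (_+1), e => (fun p => (p.1, restrict k p.2)) '' (toSet e)

/-- validity: truth at all (k,j)-models of appropriate depth -/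
def valid (φ : Formula) : Prop :=
  ∀ (k j : ℕ), depthA φ ≤ k → depthB φ ≤ j →
    ∀ (ea : KStr k) (eb : KStr j) (w : World), sat k j ea eb w φ

def satisfiable (φ : Formula) : Prop :=
  ∃ (k j : ℕ) (ea : KStr k) (eb : KStr j) (w : World),
    depthA φ ≤ k ∧ depthB φ ≤ j ∧ sat k j ea eb w φ

/-- objective (non-modal) formulas -/
def objective : Formula → Prop
  | .atom _ => True
  | .fls => True
  | .neg α => objective α
  | .or α β => objective α ∧ objective β
  | .La _ => False
  | .Na _ => False
  | .Lb _ => False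
  | .Nb _ => False

/-- a-objective: all outermost modal operators are of agent b -/
def aObjective : Formula → Prop
  | .atom _ => True
  | .fls => True
  | .neg α => aObjective α
  | .or α β => aObjective α ∧ aObjective β
  | .La _ => False
  | .Na _ => False
  | .Lb _ => True
  | .Nb _ => True

/-- b-objective: all outermost modal operators are of agent a -/
def bObjective : Formula → Prop
  | .atom _ => True
  | .fls => True
  | .neg α => bObjective α
  | .or α β => bObjective α ∧ bObjective β
  | .La _ => True
  | .Na _ => True
  | .Lb _ => False
  | .Nb _ => False

/-- basic formulas: no N_a, N_b -/
def basic : Formula → Prop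
  | .atom _ => True
  | .fls => True
  | .neg α => basic α
  | .or α β => basic α ∧ basic β
  | .La α => basic α
  | .Lb α => basic α
  | .Na _ => False
  | .Nb _ => False

/-- set of a-objective formulas of b-depth ≤ d true at `(∅, e, w)` -/
def aTheory (d : ℕ) (e : KStr d) (w : World) : Set Formula :=
  {φ | aObjective φ ∧ depthB φ ≤ d ∧ sat 0 d unit0 e w φ}

def bTheory (d : ℕ) (e : KStr d) (w : World) : Set Formula :=
  {φ | bObjective φ ∧ depthA φ ≤ d ∧ sat d 0 e unit0 w φ}

/-- Obj⁺_a(e_a) -/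
def ObjA (d : ℕ) (ea : KStr (d+1)) : Set (Set Formula) :=
  {T | ∃ p : World × KStr d, p ∈ ea ∧ T = aTheory d p.2 p.1}

def ObjB (d : ℕ) (eb : KStr (d+1)) : Set (Set Formula) :=
  {T | ∃ p : World × KStr d, p ∈ eb ∧ T = bTheory d p.2 p.1}

/-- maximally satisfiable set of a-objective formulas of b-depth ≤ d -/
def maxSatA (d : ℕ) (S : Set Formula) : Prop :=
  (∀ φ ∈ S, aObjective φ ∧ depthB φ ≤ d) ∧
  (∃ (e : KStr d) (w : World), ∀ φ ∈ S, sat 0 d unit0 e w φ) ∧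
  (∀ ψ, aObjective ψ → depthB ψ ≤ d → ψ ∉ S →
    ¬ ∃ (e : KStr d) (w : World), ∀ φ ∈ insert ψ S, sat 0 d unit0 e w φ)

def maxSatB (d : ℕ) (S : Set Formula) : Prop :=
  (∀ φ ∈ S, bObjective φ ∧ depthA φ ≤ d) ∧
  (∃ (e : KStr d) (w : World), ∀ φ ∈ S, sat d 0 e unit0 w φ) ∧
  (∀ ψ, bObjective ψ → depthA ψ ≤ d → ψ ∉ S →
    ¬ ∃ (e : KStr d) (w : World), ∀ φ ∈ insert ψ S, sat d 0 e unit0 w φ)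

/-- `onlAux bA bB φ`: φ is admissible where `bA` records that N_a is banned
(we are in the scope of a b-modality) and `bB` that N_b is banned. -/
def onlAux : Bool → Bool → Formula → Prop
  | _, _, .atom _ => True
  | _, _, .fls => True
  | bA, bB, .neg α => onlAux bA bB α
  | bA, bB, .or α β => onlAux bA bB α ∧ onlAux bA bB β
  | bA, _, .La α => onlAux bA true α
  | bA, _, .Na α => bA = false ∧ onlAux bA true α
  | _, bB, .Lb α => onlAux true bB α
  | _, bB, .Nb α => bB = false ∧ onlAux true bB α

/-- ONL_n^- : no N_j in the scope of an L_i or N_i with i ≠ j -/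
def ONLminus (φ : Formula) : Prop := onlAux false false φ

inductive BoolComb (S : Set Formula) : Formula → Prop
  | base {φ} : φ ∈ S → BoolComb S φ
  | neg {φ} : BoolComb S φ → BoolComb S (.neg φ)
  | or {φ ψ} : BoolComb S φ → BoolComb S ψ → BoolComb S (.or φ ψ)

def stepL (S : Set Formula) : Set Formula :=
  {φ | BoolComb (S ∪ {ψ | ∃ α ∈ S, ψ = .La α ∨ ψ = .Na α ∨ ψ = .Lb α ∨ ψ = .Nb α}) φ}

/-- the hierarchy ONL_n^t (t ≥ 1), with ONL_n^1 = ONL_n^- -/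
def ONLt (t : ℕ) : Set Formula := stepL^[t-1] {φ | ONLminus φ}

def conjList : List Formula → Formula
  | [] => .neg .fls
  | (φ :: l) => φ.and (conjList l)

/-- instance of a propositional tautology -/
def Taut (φ : Formula) : Prop :=
  ∀ v : Formula → Bool, (∀ α, v (.neg α) = !v α) →
    (∀ α β, v (.or α β) = (v α || v β)) → v .fls = false → v φ = true

/-- K45_n provability (two agents) -/
inductive K45 : Formula → Prop
  | taut {φ} : Taut φ → K45 φ
  | kA (α β : Formula) : K45 ((Formula.La (α.imp β)).imp ((Formula.La α).imp (Formula.La β)))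
  | kB (α β : Formula) : K45 ((Formula.Lb (α.imp β)).imp ((Formula.Lb α).imp (Formula.Lb β)))
  | fourA (α : Formula) : K45 ((Formula.La α).imp (Formula.La (Formula.La α)))
  | fourB (α : Formula) : K45 ((Formula.Lb α).imp (Formula.Lb (Formula.Lb α)))
  | fiveA (α : Formula) : K45 ((Formula.neg (Formula.La α)).imp (Formula.La (Formula.neg (Formula.La α))))
  | fiveB (α : Formula) : K45 ((Formula.neg (Formula.Lb α)).imp (Formula.Lb (Formula.neg (Formula.Lb α))))
  | mp {α β} : K45 (α.imp β) → K45 α → K45 β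
  | necA {α} : K45 α → K45 (Formula.La α)
  | necB {α} : K45 α → K45 (Formula.Lb α)

def ConsSet (Γ : Set Formula) : Prop :=
  ∀ l : List Formula, (∀ φ ∈ l, φ ∈ Γ) → ¬ K45 (Formula.neg (conjList l))

/-- basic maximally K45_n-consistent set -/
def MCS (Γ : Set Formula) : Prop :=
  (∀ φ ∈ Γ, basic φ) ∧ ConsSet Γ ∧ ∀ φ, basic φ → (φ ∈ Γ ∨ Formula.neg φ ∈ Γ)

/-- worlds of the K45_n canonical model -/
def CW := {Γ : Set Formula // MCS Γ}

def RA (Γ Δ : CW) : Prop := ∀ α, Formula.La α ∈ Γ.val → α ∈ Δ.val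
def RB (Γ Δ : CW) : Prop := ∀ α, Formula.Lb α ∈ Γ.val → α ∈ Δ.val

/-- truth of basic formulas at a world of the canonical model -/
def csat (Γ : CW) : Formula → Prop
  | .atom p => Formula.atom p ∈ Γ.val
  | .fls => False
  | .neg α => ¬ csat Γ α
  | .or α β => csat Γ α ∨ csat Γ β
  | .La α => ∀ Δ : CW, RA Γ Δ → csat Δ α
  | .Lb α => ∀ Δ : CW, RB Γ Δ → csat Δ α
  | .Na _ => True
  | .Nb _ => True

/-- the propositional valuation [w] of a canonical world -/
def wval (Γ : CW) : World := {p | Formula.atom p ∈ Γ.val}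

/-- the (k,j)-correspondence structures; `corr true` is agent a's structure,
`corr false` agent b's -/
def corr : Bool → (k : ℕ) → CW → KStr k
  | _, 0, _ => unit0
  | ag, (k+1), Γ =>
    {p : World × KStr k |
      ∃ Δ : CW, (if ag then RA Γ Δ else RB Γ Δ) ∧ p.1 = wval Δ ∧ p.2 = corr (!ag) k Δ}

/-!
An a-objective formula does not look at the a-structure at all, and looks at the b-structure only
down to the depth `useB` of its outermost b-modalities. Truth is invariant under a depth-bounded
bisimulation of structures that matches membership as well as non-membership (the latter for
`N_a`, `N_b`), and every structure has such a bisimilar copy at every sufficiently large depth: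
an atom `a₀` occurring in neither φ nor ψ lets each world be duplicated, one copy placed inside
and one outside the new structure. So the b-structure of an arbitrary model can be replaced by
some `e` of the depth of `e_a`; the pair `(w, e)` lies in `e_a` or not, and `L_a φ` resp. `N_a ψ`
makes φ resp. ψ true there, hence in the original model.
-/

open Relator

def atoms : Formula → Finset Atom
  | .atom p => {p}
  | .fls => ∅
  | .neg α => atoms α
  | .or α β => atoms α ∪ atoms β
  | .La α => atoms α
  | .Na α => atoms α
  | .Lb α => atoms α
  | .Nb α => atoms α

/-- How many levels of the a-structure the truth of a formula depends on: the a-depth of its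
outermost `L_a`, `N_a` subformulas. `useB` is the same for agent b. -/
def useA : Formula → ℕ
  | .atom _ => 0
  | .fls => 0
  | .neg α => useA α
  | .or α β => max (useA α) (useA β)
  | .La α => depthA α
  | .Na α => depthA α
  | .Lb _ => 0
  | .Nb _ => 0

def useB : Formula → ℕ
  | .atom _ => 0
  | .fls => 0
  | .neg α => useB α
  | .or α β => max (useB α) (useB β)
  | .La _ => 0
  | .Na _ => 0
  | .Lb α => depthB α
  | .Nb α => depthB α

theorem useA_useB_le_depth (φ : Formula) :
    useA φ ≤ depthA φ ∧ useB φ + 1 ≤ depthA φ ∧ useB φ ≤ depthB φ ∧ useA φ + 1 ≤ depthB φ := by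
  induction φ <;> simp only [useA, useB, depthA, depthB] at * <;> omega

theorem useA_eq_zero_of_aObjective {φ : Formula} (h : aObjective φ) : useA φ = 0 := by
  induction φ with
  | neg α ih => exact ih h
  | or α β ihα ihβ => simp [useA, ihα h.1, ihβ h.2]
  | La | Na => exact h.elim
  | _ => rfl

/-- `Bisim A d e f`: the structures `e` and `f` cannot be told apart down to depth `d` by
formulas over the atoms in `A`, neither through membership nor through non-membership. -/
def Bisim (A : Set Atom) : ℕ → {m j : ℕ} → KStr m → KStr j → Prop
  | 0, _, _, _, _ => True
  | d+1, m+1, j+1, e, f =>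
      BiTotal fun (p : World × KStr m) (q : World × KStr j) =>
        (p ∈ e ↔ q ∈ f) ∧ p.1 ∩ A = q.1 ∩ A ∧ Bisim A d p.2 q.2
  | _+1, _, _, _, _ => False

theorem Bisim.symm {A : Set Atom} :
    ∀ {d m j : ℕ} {e : KStr m} {f : KStr j}, Bisim A d e f → Bisim A d f e
  | 0, _, _, _, _, _ => trivial
  | _+1, _+1, _+1, _, _, h =>
      BiTotal.symm (fun _ _ ⟨hmem, hw, hs⟩ => ⟨hmem.symm, hw.symm, hs.symm⟩) h

theorem exists_biTotal_mem_iff {α β : Type*} {R : α → β → Prop} (T : α → Prop)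
    (hR : LeftTotal R) (hT : ∀ b, ∃ a, R a b ∧ T a) (hnT : ∀ b, ∃ a, R a b ∧ ¬ T a)
    (t : Set β) : ∃ s : Set α, BiTotal fun a b => (a ∈ s ↔ b ∈ t) ∧ R a b := by
  refine ⟨{a | (∃ b ∈ t, R a b) ∧ (T a → ∀ b, R a b → b ∈ t)}, fun a => ?_, fun b => ?_⟩
  · by_cases ha : (∃ b ∈ t, R a b) ∧ (T a → ∀ b, R a b → b ∈ t)
    · obtain ⟨b, hb, hab⟩ := ha.1
      exact ⟨b, iff_of_true ha hb, hab⟩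
    · suffices ∃ b, R a b ∧ b ∉ t from this.imp fun b ⟨hab, hb⟩ => ⟨iff_of_false ha hb, hab⟩
      by_contra! h
      obtain ⟨b, hab⟩ := hR a
      exact ha ⟨⟨b, h b hab, hab⟩, fun _ => h⟩
  · by_cases hb : b ∈ t
    · obtain ⟨a, hab, hTa⟩ := hnT b
      exact ⟨a, iff_of_true ⟨⟨b, hb, hab⟩, fun h => absurd h hTa⟩ hb, hab⟩
    · obtain ⟨a, hab, hTa⟩ := hT b
      exact ⟨a, iff_of_false (fun h => hb (h.2 hTa b hab)) hb, hab⟩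

theorem exists_bisim {A : Set Atom} {a₀ : Atom} (ha₀ : a₀ ∉ A) :
    ∀ {d m j : ℕ}, d ≤ m → d ≤ j → ∀ f : KStr j, ∃ e : KStr m, Bisim A d e f
  | 0, 0, _, _, _, _ => ⟨unit0, trivial⟩
  | 0, _+1, _, _, _, _ => ⟨(∅ : Set _), trivial⟩
  | d+1, m+1, j+1, hm, hj, f => by
      have back (y : KStr j) : ∃ x : KStr m, Bisim A d x y :=
        exists_bisim ha₀ (by omega) (by omega) y
      have forth (x : KStr m) : ∃ y : KStr j, Bisim A d x y :=
        (exists_bisim ha₀ (by omega) (by omega) x).imp fun _ h => h.symm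
      -- The marker atom `a₀` is invisible to `A`, so each world has copies on both sides of it.
      obtain ⟨e, he⟩ := exists_biTotal_mem_iff (t := toSet f)
        (R := fun p q => p.1 ∩ A = q.1 ∩ A ∧ Bisim A d p.2 q.2) (fun p => a₀ ∈ p.1)
        (fun p => let ⟨y, h⟩ := forth p.2; ⟨(p.1, y), rfl, h⟩)
        (fun q => let ⟨x, hx⟩ := back q.2;
          ⟨(insert a₀ q.1, x), ⟨Set.insert_inter_of_notMem ha₀, hx⟩, Set.mem_insert a₀ q.1⟩)
        (fun q => let ⟨x, hx⟩ := back q.2;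
          ⟨(q.1 \ {a₀}, x),
            ⟨by rw [Set.sdiff_inter_right_comm, Set.sdiff_singleton_eq_self (ha₀ ·.2)], hx⟩,
            fun h => h.2 rfl⟩)
      exact ⟨e, he⟩

theorem sat_congr {A : Set Atom} {α : Formula} (hα : ↑(atoms α) ⊆ A) :
    ∀ {da db ka ja kb jb : ℕ} {x : KStr ka} {y : KStr ja} {e : KStr kb} {f : KStr jb}
      {w w' : World}, useA α ≤ da → useB α ≤ db → Bisim A da x y → Bisim A db e f →
      w ∩ A = w' ∩ A → (sat ka kb x e w α ↔ sat ja jb y f w' α) := by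
  induction α with
  | atom p =>
    intro _ _ _ _ _ _ _ _ _ _ w w' _ _ _ _ hw
    have hp : p ∈ A := hα (by simp [atoms])
    simpa [sat, hp] using congrArg (p ∈ ·) hw
  | fls => intros; exact Iff.rfl
  | neg γ ih =>
    intro _ _ _ _ _ _ _ _ _ _ _ _ hda hdb hxy hef hw
    exact not_congr (ih hα hda hdb hxy hef hw)
  | or γ δ ihγ ihδ =>
    simp only [atoms, Finset.coe_union, Set.union_subset_iff] at hα
    intro _ _ _ _ _ _ _ _ _ _ _ _ hda hdb hxy hef hw
    simp only [useA, useB, max_le_iff] at hda hdb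
    exact or_congr (ihγ hα.1 hda.1 hdb.1 hxy hef hw) (ihδ hα.2 hda.2 hdb.2 hxy hef hw)
  | La γ ih | Na γ ih =>
    intro da _ ka ja _ _ x y _ _ _ _ hda _ hxy _ _
    have := useA_useB_le_depth γ
    simp only [useA] at hda
    obtain ⟨d, rfl⟩ : ∃ d, da = d + 1 := ⟨da - 1, by omega⟩
    rcases ka with _ | ka <;> rcases ja with _ | ja <;> simp only [Bisim] at hxy
    simp only [sat]
    exact hxy.rel_forall fun p q ⟨hmem, hw, hs⟩ =>
      imp_congr (by rw [hmem]) (ih hα (da := d + 1) (by omega) (by omega) hxy hs hw)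
  | Lb γ ih | Nb γ ih =>
    intro _ db _ _ kb jb _ _ e f _ _ _ hdb _ hef _
    have := useA_useB_le_depth γ
    simp only [useB] at hdb
    obtain ⟨d, rfl⟩ : ∃ d, db = d + 1 := ⟨db - 1, by omega⟩
    rcases kb with _ | kb <;> rcases jb with _ | jb <;> simp only [Bisim] at hef
    simp only [sat]
    exact hef.rel_forall fun p q ⟨hmem, hw, hs⟩ =>
      imp_congr (by rw [hmem]) (ih hα (db := d + 1) (by omega) (by omega) hs hef hw)

theorem sat_congr_of_aObjective {A : Set Atom} {α : Formula} (hα : aObjective α)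
    (hA : ↑(atoms α) ⊆ A) {d k k' j j' : ℕ} (x : KStr k) (y : KStr k') {e : KStr j}
    {f : KStr j'} (w : World) (hd : useB α ≤ d) (hef : Bisim A d e f) :
    sat k j x e w α ↔ sat k' j' y f w α :=
  sat_congr hA (useA_eq_zero_of_aObjective hα).le hd trivial hef rfl

/-- if φ, ψ are a-objective and L_a φ ∧ N_a ψ is satisfiable,
then φ ∨ ψ is valid. -/
theorem La_Na_forces_valid (φ ψ : Formula) (h1 : aObjective φ) (h2 : aObjective ψ)
    (h : satisfiable ((Formula.La φ).and (Formula.Na ψ))) :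
    valid (Formula.or φ ψ) := by
  obtain ⟨k, _, ea, _, _, hk, _, hs⟩ := h
  have hφ := useA_useB_le_depth φ
  have hψ := useA_useB_le_depth ψ
  simp only [Formula.and, depthA, max_le_iff] at hk
  obtain ⟨m, rfl⟩ : ∃ m, k = m + 1 := ⟨k - 1, by omega⟩
  simp only [Formula.and, sat, not_or, not_not] at hs
  obtain ⟨hL, hN⟩ := hs
  intro K J _ hJ EA EB w
  simp only [depthB, max_le_iff] at hJ
  obtain ⟨a₀, ha₀⟩ := Infinite.exists_notMem_finset (atoms φ ∪ atoms ψ)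
  obtain ⟨e, he⟩ := exists_bisim (A := ↑(atoms φ ∪ atoms ψ)) (d := max (useB φ) (useB ψ))
    (m := m) (by exact_mod_cast ha₀) (by omega) (by omega) EB
  by_cases hp : (w, e) ∈ ea
  · exact Or.inl ((sat_congr_of_aObjective h1 (by simp) ea EA w (le_max_left _ _) he).1 (hL _ hp))
  · exact Or.inr ((sat_congr_of_aObjective h2 (by simp) ea EA w (le_max_right _ _) he).1 (hN _ hp))
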